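/- arXiv:2005.12910 — 5 statements merged into one kernel-verified Lean document; each statement's English description precedes it below -/
import Mathlib

section
/- Let L be a non-degenerate integral lattice of finite rank d, and let λ be a nonzero element of ℚ ⊗_ℤ L. Then there exist elements α₁, …, α_d ∈ L, linearly independent over ℤ (so that ⊕_{i=1}^d ℤα_i is a rank-d sublattice of L), such that ⟨α_i, α_i⟩ ∉ {0, 2} for all i = 1, …, d, ⟨α_i, α_j⟩ = 0 for every pair of distinct indices i, j ∈ {1, …, d}, and ⟨α_i, λ⟩ ≠ 0 for all i = 1, …, d. -/
/-!
Over `ℚ` one splits off anisotropic vectors one at a time: pick `v` with `⟨v, v⟩ ≠ 0`,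
`⟨v, λ⟩ ≠ 0` and `λ ∉ ℚ v`, and recurse in the nondegenerate hyperplane `v^⊥` with the
projection of `λ` to `v^⊥`, which pairs with `v^⊥` exactly as `λ` does. Such a `v` exists: it
suffices that a nonzero quadratic function and two nonzero linear functions (the second one
vanishing on `λ`) are all nonzero at `v`, and over an infinite field a product of
functions that are polynomial along lines and each nonzero somewhere is nonzero somewhere.
Clearing denominators turns the rational vectors into lattice vectors with the same
orthogonality relations and nonvanishing pairings.
-/

open Polynomial
open scoped TensorProduct

section PolynomialOnLines

variable {K V : Type*} [CommRing K] [AddCommGroup V] [Module K V]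

def IsPolynomialOnLines (p : V → K) : Prop :=
  ∀ a b : V, ∃ P : K[X], ∀ t : K, p (a + t • b) = P.eval t

theorem IsPolynomialOnLines.mul {p q : V → K} (hp : IsPolynomialOnLines p)
    (hq : IsPolynomialOnLines q) : IsPolynomialOnLines (p * q) := by
  intro a b
  obtain ⟨P, hP⟩ := hp a b
  obtain ⟨Q, hQ⟩ := hq a b
  exact ⟨P * Q, fun t => by simp [hP, hQ]⟩

theorem LinearMap.isPolynomialOnLines (f : V →ₗ[K] K) : IsPolynomialOnLines f :=
  fun a b => ⟨C (f a) + C (f b) * X, fun t => by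
    simp only [map_add, map_smul, smul_eq_mul, eval_add, eval_C, eval_mul, eval_X]; ring⟩

theorem LinearMap.BilinForm.isPolynomialOnLines_apply_self (B : LinearMap.BilinForm K V) :
    IsPolynomialOnLines fun v => B v v := fun a b =>
  ⟨C (B a a) + C (B a b + B b a) * X + C (B b b) * X ^ 2, fun t => by simp; ring⟩

theorem IsPolynomialOnLines.exists_ne_zero_and_ne_zero [IsDomain K] [Infinite K] {p q : V → K}
    (hp : IsPolynomialOnLines p) (hq : IsPolynomialOnLines q) {a b : V} (ha : p a ≠ 0)
    (hb : q b ≠ 0) : ∃ c, p c ≠ 0 ∧ q c ≠ 0 := by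
  obtain ⟨P, hP⟩ := hp a (b - a)
  obtain ⟨Q, hQ⟩ := hq a (b - a)
  have hP0 : P ≠ 0 := by rintro rfl; exact ha (by simpa using hP 0)
  have hQ0 : Q ≠ 0 := by rintro rfl; exact hb (by simpa using hQ 1)
  obtain ⟨t, ht⟩ : ∃ t, (P * Q).eval t ≠ 0 := by
    by_contra! h
    exact mul_ne_zero hP0 hQ0 (Polynomial.funext (by simpa using h))
  rw [eval_mul, ← hP, ← hQ] at ht
  exact ⟨a + t • (b - a), left_ne_zero_of_mul ht, right_ne_zero_of_mul ht⟩

end PolynomialOnLines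

namespace LinearMap.BilinForm

variable {K V : Type*} [Field K] [AddCommGroup V] [Module K V] {B : LinearMap.BilinForm K V}

theorem exists_apply_self_ne_zero_and_apply_ne_zero [Infinite K] [NeZero (2 : K)]
    (hB : B.IsSymm) (hnd : B.Nondegenerate) {l : V} (hl : l ≠ 0) :
    ∃ v, B v v ≠ 0 ∧ B v l ≠ 0 := by
  have : Invertible (2 : K) := invertibleOfNonzero two_ne_zero
  have hB0 : B ≠ 0 := by
    rintro rfl
    exact hl (hnd.2 l fun _ => rfl)
  obtain ⟨a, ha⟩ := exists_bilinForm_self_ne_zero hB0 (isSymm_iff.1 hB)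
  obtain ⟨b, hb⟩ : ∃ b, B b l ≠ 0 := by
    by_contra! h
    exact hl (hnd.2 l h)
  exact B.isPolynomialOnLines_apply_self.exists_ne_zero_and_ne_zero
    (B.flip l).isPolynomialOnLines ha hb

theorem exists_apply_self_ne_zero_and_apply_ne_zero_and_notMem_span [Infinite K] [NeZero (2 : K)]
    (hB : B.IsSymm) (hnd : B.Nondegenerate) (hV : 2 ≤ Module.finrank K V)
    {l : V} (hl : l ≠ 0) : ∃ v, B v v ≠ 0 ∧ B v l ≠ 0 ∧ l ∉ K ∙ v := by
  obtain ⟨a, ha⟩ := exists_apply_self_ne_zero_and_apply_ne_zero hB hnd hl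
  have hlt : K ∙ l < ⊤ := by
    refine lt_top_iff_ne_top.2 fun h => ?_
    have := finrank_span_singleton (K := K) hl
    rw [h, finrank_top] at this
    omega
  obtain ⟨g, hg0, hlg⟩ := Submodule.exists_le_ker_of_lt_top _ hlt
  obtain ⟨b, hb⟩ : ∃ b, g b ≠ 0 := by
    by_contra! h
    exact hg0 (LinearMap.ext h)
  obtain ⟨v, hv, hgv⟩ := (B.isPolynomialOnLines_apply_self.mul
    (B.flip l).isPolynomialOnLines).exists_ne_zero_and_ne_zero g.isPolynomialOnLines
    (mul_ne_zero ha.1 ha.2) hb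
  refine ⟨v, left_ne_zero_of_mul hv, right_ne_zero_of_mul hv, fun hlv => ?_⟩
  obtain ⟨c, rfl⟩ := Submodule.mem_span_singleton.1 hlv
  have hc : c * g v = 0 := by simpa using hlg (Submodule.mem_span_singleton_self (c • v))
  exact hl (by rw [(mul_eq_zero.1 hc).resolve_right hgv, zero_smul])

theorem exists_mem_orthogonal_ne_zero_and_apply_eq (hB : B.IsSymm) {v l : V} (hv : B v v ≠ 0)
    (hl : l ∉ K ∙ v) :
    ∃ l' ∈ B.orthogonal (K ∙ v), l' ≠ 0 ∧ ∀ w ∈ B.orthogonal (K ∙ v), B w l' = B w l := by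
  have hvw : ∀ w ∈ B.orthogonal (K ∙ v), B w v = 0 := fun w hw => by
    rw [hB.eq]; exact mem_orthogonal_iff.1 hw v (Submodule.mem_span_singleton_self v)
  refine ⟨l - (B v l / B v v) • v, ?_, ?_, fun w hw => by simp [hvw w hw]⟩
  · refine mem_orthogonal_iff.2 fun u hu => ?_
    obtain ⟨c, rfl⟩ := Submodule.mem_span_singleton.1 hu
    simp [div_mul_cancel₀ _ hv]
  · rw [sub_ne_zero]
    intro h
    exact hl (h ▸ Submodule.smul_mem _ _ (Submodule.mem_span_singleton_self v))

theorem exists_orthogonal_family_apply_ne_zero [Infinite K] [NeZero (2 : K)]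
    [FiniteDimensional K V] (hB : B.IsSymm) (hnd : B.Nondegenerate) {l : V} (hl : l ≠ 0) {d : ℕ}
    (hd : Module.finrank K V = d) :
    ∃ v : Fin d → V, (∀ i, B (v i) (v i) ≠ 0) ∧ (∀ i j, i ≠ j → B (v i) (v j) = 0) ∧
      ∀ i, B (v i) l ≠ 0 := by
  induction d generalizing V with
  | zero => exact ⟨Fin.elim0, fun i => i.elim0, fun i => i.elim0, fun i => i.elim0⟩
  | succ d ih =>
    obtain ⟨v₁, hv₁, hv₁l, hlv₁⟩ : ∃ v₁, B v₁ v₁ ≠ 0 ∧ B v₁ l ≠ 0 ∧ (d ≠ 0 → l ∉ K ∙ v₁) := by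
      by_cases hd0 : d = 0
      · obtain ⟨v₁, h⟩ := exists_apply_self_ne_zero_and_apply_ne_zero hB hnd hl
        exact ⟨v₁, h.1, h.2, absurd hd0⟩
      · obtain ⟨v₁, h⟩ := exists_apply_self_ne_zero_and_apply_ne_zero_and_notMem_span hB hnd
          (by omega) hl
        exact ⟨v₁, h.1, h.2.1, fun _ => h.2.2⟩
    have hW : Module.finrank K (B.orthogonal (K ∙ v₁)) = d := by
      have := Submodule.finrank_add_eq_of_isCompl (isCompl_span_singleton_orthogonal hv₁)
      rw [finrank_span_singleton (fun h => hv₁ (by simp [h])), hd] at this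
      omega
    have hv₁W : ∀ w ∈ B.orthogonal (K ∙ v₁), B v₁ w = 0 := fun w hw =>
      mem_orthogonal_iff.1 hw v₁ (Submodule.mem_span_singleton_self v₁)
    obtain ⟨w, hw, hww, hwl⟩ : ∃ w : Fin d → B.orthogonal (K ∙ v₁), (∀ i, B (w i) (w i) ≠ 0) ∧
        (∀ i j, i ≠ j → B (w i) (w j) = 0) ∧ ∀ i, B (w i) l ≠ 0 := by
      rcases eq_or_ne d 0 with rfl | hd0
      · exact ⟨Fin.elim0, fun i => i.elim0, fun i => i.elim0, fun i => i.elim0⟩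
      obtain ⟨l', hl'W, hl', hl'l⟩ := exists_mem_orthogonal_ne_zero_and_apply_eq hB hv₁ (hlv₁ hd0)
      obtain ⟨w, hw, hww, hwl⟩ := ih (B := B.restrict _) ⟨fun x y => hB.eq x y⟩
        (restrict_nondegenerate_orthogonal_spanSingleton B hnd hB.isRefl hv₁)
        (l := ⟨l', hl'W⟩) (by simpa using hl') hW
      exact ⟨w, hw, hww, fun i => by simpa [hl'l _ (w i).2] using hwl i⟩
    refine ⟨Fin.cons v₁ fun i => w i, ?_, ?_, ?_⟩
    · simpa [Fin.forall_fin_succ] using ⟨hv₁, hw⟩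
    · simp only [Fin.forall_fin_succ, Fin.cons_zero, Fin.cons_succ, ne_eq, not_true_eq_false,
        Fin.succ_ne_zero, (Fin.succ_ne_zero _).symm, not_false_eq_true, forall_const, Fin.succ_inj,
        IsEmpty.forall_iff, true_and]
      exact ⟨fun j => hv₁W _ (w j).2, fun i => ⟨by rw [hB.eq]; exact hv₁W _ (w i).2, hww i⟩⟩
    · simpa [Fin.forall_fin_succ] using ⟨hv₁l, hwl⟩

theorem linearIndependent_of_apply_self_ne_zero {R M ι : Type*} [CommRing R] [NoZeroDivisors R]
    [AddCommGroup M] [Module R M] {B : LinearMap.BilinForm R M} {v : ι → M}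
    (hv : ∀ i, B (v i) (v i) ≠ 0) (hvv : ∀ i j, i ≠ j → B (v i) (v j) = 0) :
    LinearIndependent R v := by
  rw [linearIndependent_iff']
  intro s c hs i hi
  have hsum : ∑ j ∈ s, c j * B (v j) (v i) = c i * B (v i) (v i) :=
    Finset.sum_eq_single_of_mem i hi fun j _ hji => by rw [hvv j i hji, mul_zero]
  have : c i * B (v i) (v i) = 0 := by
    simpa [hsum, map_sum, LinearMap.sum_apply] using congrArg (B · (v i)) hs
  exact (mul_eq_zero.1 this).resolve_right (hv i)

theorem baseChange_one_tmul_one_tmul {R A M : Type*} [CommRing R] [CommRing A] [Algebra R A]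
    [AddCommGroup M] [Module R M] (B : LinearMap.BilinForm R M) (x y : M) :
    B.baseChange A (1 ⊗ₜ x) (1 ⊗ₜ y) = algebraMap R A (B x y) := by
  rw [baseChange_tmul, mul_one, Algebra.algebraMap_eq_smul_one]

section BaseChange

variable {R K M : Type*} [CommRing R] [IsDomain R] [Field K] [Algebra R K] [IsFractionRing R K]
  [AddCommGroup M] [Module R M]

variable (R) in
theorem _root_.TensorProduct.exists_smul_eq_one_tmul (v : K ⊗[R] M) :
    ∃ r : R, r ≠ 0 ∧ ∃ x : M, r • v = 1 ⊗ₜ x := by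
  obtain ⟨⟨x, r⟩, h⟩ := IsLocalizedModule.surj (nonZeroDivisors R) (TensorProduct.mk R K M 1) v
  exact ⟨r, nonZeroDivisors.coe_ne_zero r, x, h⟩

theorem SeparatingLeft.baseChange {B : LinearMap.BilinForm R M} (hB : B.SeparatingLeft) :
    (B.baseChange K).SeparatingLeft := by
  intro v hv
  obtain ⟨r, hr, x, hx⟩ := TensorProduct.exists_smul_eq_one_tmul R v
  have hx0 : x = 0 := hB x fun y => by
    apply IsFractionRing.injective R K
    rw [← baseChange_one_tmul_one_tmul, ← hx, map_smul_of_tower, smul_apply, hv, smul_zero,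
      map_zero]
  rw [hx0, TensorProduct.tmul_zero, ← algebraMap_smul K] at hx
  exact (smul_eq_zero.1 hx).resolve_left
    ((map_ne_zero_iff _ (IsFractionRing.injective R K)).2 hr)

theorem exists_orthogonal_family_of_baseChange {ι : Type*} {B : LinearMap.BilinForm R M}
    {v : ι → K ⊗[R] M} {l : K ⊗[R] M} (hv : ∀ i, B.baseChange K (v i) (v i) ≠ 0)
    (hvv : ∀ i j, i ≠ j → B.baseChange K (v i) (v j) = 0)
    (hvl : ∀ i, B.baseChange K (v i) l ≠ 0) :
    ∃ x : ι → M, (∀ i, B (x i) (x i) ≠ 0) ∧ (∀ i j, i ≠ j → B (x i) (x j) = 0) ∧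
      ∀ i, B.baseChange K (1 ⊗ₜ x i) l ≠ 0 := by
  choose r hr x hx using fun i => TensorProduct.exists_smul_eq_one_tmul R (v i)
  simp only [← algebraMap_smul K (r _)] at hx
  have hxx : ∀ i j, B (x i) (x j) = 0 ↔ B.baseChange K (v i) (v j) = 0 := fun i j => by
    rw [← map_eq_zero_iff _ (IsFractionRing.injective R K), ← baseChange_one_tmul_one_tmul,
      ← hx, ← hx]
    simp [hr i, hr j]
  refine ⟨x, fun i => (hxx i i).not.2 (hv i), fun i j hij => (hxx i j).2 (hvv i j hij),
    fun i => ?_⟩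
  rw [← hx]
  simp [hr i, hvl i]

end BaseChange

end LinearMap.BilinForm

/-- **Lemma 3.3.** Let `L` be a non-degenerate integral lattice of finite rank `d`
and `lam` a nonzero element of `ℚ ⊗[ℤ] L`.  Then there exist linearly independent
`α₁, …, α_d ∈ L` with `⟨αᵢ,αᵢ⟩ ∉ {0, 2}`, `⟨αᵢ,αⱼ⟩ = 0` for `i ≠ j`, and
`⟨αᵢ, lam⟩ ≠ 0` for all `i`, where the pairing with `lam` is taken with respect to
the base change of the form to `ℚ ⊗[ℤ] L`. -/
theorem nondegenerate_integral_lattice_orthogonal_basis_pairing_nonzero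
    (d : ℕ) (L : Type*) [AddCommGroup L] [Module ℤ L]
    [Module.Free ℤ L] [Module.Finite ℤ L] (hrank : Module.finrank ℤ L = d)
    (B : LinearMap.BilinForm ℤ L) (hsymm : ∀ x y : L, B x y = B y x)
    (hnondeg : ∀ x : L, (∀ y : L, B x y = 0) → x = 0)
    (lam : ℚ ⊗[ℤ] L) (hlam : lam ≠ 0) :
    ∃ α : Fin d → L, LinearIndependent ℤ α ∧
      (∀ i, B (α i) (α i) ≠ 0 ∧ B (α i) (α i) ≠ 2) ∧
      (∀ i j, i ≠ j → B (α i) (α j) = 0) ∧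
      (∀ i, (B.baseChange ℚ) ((1 : ℚ) ⊗ₜ[ℤ] α i) lam ≠ 0) := by
  have hsymm' : (B.baseChange ℚ).IsSymm :=
    LinearMap.BilinForm.isSymm_iff.2 (LinearMap.BilinForm.IsSymm.baseChange ℚ ⟨hsymm⟩)
  have hnondeg' : (B.baseChange ℚ).Nondegenerate :=
    hsymm'.isRefl.nondegenerate_iff_separatingLeft.2
      (LinearMap.BilinForm.SeparatingLeft.baseChange hnondeg)
  obtain ⟨v, hv, hvv, hvl⟩ :=
    LinearMap.BilinForm.exists_orthogonal_family_apply_ne_zero hsymm' hnondeg' hlam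
    (by rw [Module.finrank_baseChange, hrank])
  obtain ⟨x, hx, hxx, hxl⟩ :=
    LinearMap.BilinForm.exists_orthogonal_family_of_baseChange hv hvv hvl
  have hα : ∀ i j, B (x i + x i) (x j + x j) = 4 * B (x i) (x j) := fun i j => by
    simp only [map_add, LinearMap.add_apply]; ring
  -- Doubling makes every norm divisible by 4, so none of them is 2.
  have hdiag : ∀ i, B (x i + x i) (x i + x i) ≠ 0 ∧ B (x i + x i) (x i + x i) ≠ 2 := fun i => by
    have := hx i
    rw [hα]
    omega
  have horth : ∀ i j, i ≠ j → B (x i + x i) (x j + x j) = 0 := fun i j hij => by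
    rw [hα, hxx i j hij, mul_zero]
  refine ⟨fun i => x i + x i, LinearMap.BilinForm.linearIndependent_of_apply_self_ne_zero
    (fun i => (hdiag i).1) horth, hdiag, horth, fun i => ?_⟩
  rw [TensorProduct.tmul_add, map_add, LinearMap.add_apply, ← two_mul]
  exact mul_ne_zero two_ne_zero (hxl i)
end

section
/- Let L be a non-degenerate even lattice of finite rank which is not positive definite, and let λ be any element of ℚ ⊗_ℤ L. Then for every rational number k, the set {β ∈ λ + L : ⟨β, β⟩ ≤ k} is infinite, where λ + L denotes the coset of L in ℚ ⊗_ℤ L through λ. -/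
/-!
Pick `x ≠ 0` with `⟨x, x⟩ ≤ 0`. Non-degeneracy gives `y` with `⟨y, x⟩ ≠ 0`, so one of `λ`
and `λ + y` pairs non-trivially with `x`; call it `w` and replace `x` by `-x` if necessary, so
that `⟨w, x⟩ < 0`. Then `⟨w + n x, w + n x⟩ ≤ ⟨w, w⟩ + 2 n ⟨w, x⟩ → -∞`, so all but finitely
many of the distinct points `w + n x` of `λ + L` have norm at most `k`.
-/

open Filter TensorProduct

namespace LinearMap.BilinForm

section Ring

variable {R V : Type*} [CommRing R] [AddCommGroup V] [Module R V] {Q : LinearMap.BilinForm R V}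

theorem apply_add_smul_add_smul (hQ : Q.IsSymm) (w t : V) (c : R) :
    Q (w + c • t) (w + c • t) = Q w w + 2 * c * Q w t + c ^ 2 * Q t t := by
  simp only [map_add, map_smul, LinearMap.add_apply, LinearMap.smul_apply, smul_eq_mul,
    hQ.eq t w]
  ring

theorem apply_ne_zero_or_add_apply_ne_zero {u t : V} (h : Q u t ≠ 0) (w : V) :
    Q w t ≠ 0 ∨ Q (w + u) t ≠ 0 := by
  by_contra! hw
  obtain ⟨hwt, hwut⟩ := hw
  rw [map_add, LinearMap.add_apply, hwt, zero_add] at hwut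
  exact h hwut

end Ring

section OrderedField

variable {K V : Type*} [Field K] [LinearOrder K] [IsStrictOrderedRing K]
  [AddCommGroup V] [Module K V] {Q : LinearMap.BilinForm K V}

theorem tendsto_apply_add_natCast_smul_atBot [Archimedean K] (hQ : Q.IsSymm) {w t : V}
    (htt : Q t t ≤ 0) (hwt : Q w t < 0) :
    Tendsto (fun n : ℕ ↦ Q (w + (n : K) • t) (w + (n : K) • t)) atTop atBot := by
  have hlin : Tendsto (fun n : ℕ ↦ Q w w + 2 * Q w t * n) atTop atBot :=
    tendsto_atBot_add_const_left _ _ <|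
      tendsto_natCast_atTop_atTop.const_mul_atTop_of_neg (by linarith)
  refine tendsto_atBot_mono (fun n ↦ ?_) hlin
  rw [apply_add_smul_add_smul hQ]
  nlinarith [sq_nonneg (n : K)]

end OrderedField

variable {L : Type*} [AddCommGroup L] [Module ℤ L] {B : LinearMap.BilinForm ℤ L}

theorem exists_baseChange_add_tmul_apply_tmul_neg (K : Type*) [Field K] [LinearOrder K]
    [IsStrictOrderedRing K] (hsymm : ∀ x y : L, B x y = B y x)
    (hnondeg : ∀ x : L, (∀ y : L, B x y = 0) → x = 0) {x : L} (hx : x ≠ 0)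
    (hxx : B x x ≤ 0) (lam : K ⊗[ℤ] L) :
    ∃ v t : L, B t t ≤ 0 ∧ B.baseChange K (lam + 1 ⊗ₜ v) (1 ⊗ₜ t) < 0 := by
  obtain ⟨y, hy⟩ : ∃ y, B y x ≠ 0 := by
    by_contra! h
    exact hx (hnondeg x fun y ↦ hsymm x y ▸ h y)
  have hyx : B.baseChange K (1 ⊗ₜ y) (1 ⊗ₜ x) ≠ 0 := by simpa using hy
  obtain ⟨v, hv⟩ : ∃ v : L, B.baseChange K (lam + 1 ⊗ₜ v) (1 ⊗ₜ x) ≠ 0 := by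
    rcases apply_ne_zero_or_add_apply_ne_zero hyx lam with h | h
    · exact ⟨0, by simpa using h⟩
    · exact ⟨y, h⟩
  rcases hv.lt_or_gt with hneg | hpos
  · exact ⟨v, x, hxx, hneg⟩
  · exact ⟨v, -x, by simpa using hxx, by rwa [tmul_neg, map_neg, Left.neg_neg_iff]⟩

end LinearMap.BilinForm

theorem coset_norm_le_infinite_of_not_posDef_general
    (L : Type*) [AddCommGroup L] [Module ℤ L]
    (B : LinearMap.BilinForm ℤ L) (hsymm : ∀ x y : L, B x y = B y x)
    (hnondeg : ∀ x : L, (∀ y : L, B x y = 0) → x = 0)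
    (hnotpos : ¬ ∀ x : L, x ≠ 0 → 0 < B x x)
    (lam : ℚ ⊗[ℤ] L) (k : ℚ) :
    {β : ℚ ⊗[ℤ] L |
        (∃ α : L, β = lam + (1 : ℚ) ⊗ₜ[ℤ] α) ∧
        (B.baseChange ℚ) β β ≤ k}.Infinite := by
  obtain ⟨x, hx, hxx⟩ : ∃ x : L, x ≠ 0 ∧ B x x ≤ 0 := by simpa using hnotpos
  obtain ⟨v, t, htt, hneg⟩ :=
    LinearMap.BilinForm.exists_baseChange_add_tmul_apply_tmul_neg ℚ hsymm hnondeg hx hxx lam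
  have ht : (1 : ℚ) ⊗ₜ[ℤ] t ≠ 0 := by
    intro h
    simp [h] at hneg
  let f (n : ℕ) : ℚ ⊗[ℤ] L := lam + 1 ⊗ₜ v + (n : ℚ) • 1 ⊗ₜ t
  have hf : f.Injective :=
    (add_right_injective _).comp ((smul_left_injective ℚ ht).comp Nat.cast_injective)
  have hQ : (B.baseChange ℚ).IsSymm :=
    LinearMap.BilinForm.isSymm_iff.mpr (LinearMap.BilinForm.IsSymm.baseChange ℚ ⟨hsymm⟩)
  have hlim := LinearMap.BilinForm.tendsto_apply_add_natCast_smul_atBot hQ (by simpa using htt) hneg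
  have hinf : {n : ℕ | B.baseChange ℚ (f n) (f n) ≤ k}.Infinite :=
    Nat.frequently_atTop_iff_infinite.mp (hlim.eventually (eventually_le_atBot k)).frequently
  refine (hinf.image hf.injOn).mono ?_
  rintro _ ⟨n, hn, rfl⟩
  exact ⟨⟨v + n • t, by simp [f, tmul_add, add_assoc, Nat.cast_smul_eq_nsmul]⟩, hn⟩

/-- If `L` is a non-degenerate even lattice of finite rank which is not positive
definite, then for any `lam ∈ ℚ ⊗[ℤ] L` and any rational `k`, the set of elements
`β` of the coset `lam + L` with `⟨β,β⟩ ≤ k` is infinite. -/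
theorem coset_norm_le_infinite_of_not_posDef
    (L : Type*) [AddCommGroup L] [Module ℤ L]
    [Module.Free ℤ L] [Module.Finite ℤ L]
    (B : LinearMap.BilinForm ℤ L) (hsymm : ∀ x y : L, B x y = B y x)
    (hnondeg : ∀ x : L, (∀ y : L, B x y = 0) → x = 0)
    (heven : ∀ x : L, Even (B x x))
    (hnotpos : ¬ ∀ x : L, x ≠ 0 → 0 < B x x)
    (lam : ℚ ⊗[ℤ] L) (k : ℚ) :
    {β : ℚ ⊗[ℤ] L |
        (∃ α : L, β = lam + (1 : ℚ) ⊗ₜ[ℤ] α) ∧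
        (B.baseChange ℚ) β β ≤ k}.Infinite :=
  coset_norm_le_infinite_of_not_posDef_general L B hsymm hnondeg hnotpos lam k
end

section
/- The integer polynomial g₂(n) = 30976 n¹⁰ − 93632 n⁹ − 274896 n⁸ + 676496 n⁷ + 70580 n⁶ − 1376964 n⁵ + 1569114 n⁴ − 766098 n³ + 138753 n² + 14580 n − 6561 satisfies g₂(n) ≠ 0 for every integer n. -/
/-- The polynomial `g₂` has no integer zero. -/
theorem g2_ne_zero (n : ℤ) :
    30976 * n ^ 10 - 93632 * n ^ 9 - 274896 * n ^ 8 + 676496 * n ^ 7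
      + 70580 * n ^ 6 - 1376964 * n ^ 5 + 1569114 * n ^ 4 - 766098 * n ^ 3
      + 138753 * n ^ 2 + 14580 * n - 6561 ≠ 0 := by
  intro h
  have h17 : (30976 * (n : ZMod 17) ^ 10 - 93632 * n ^ 9 - 274896 * n ^ 8 + 676496 * n ^ 7
      + 70580 * n ^ 6 - 1376964 * n ^ 5 + 1569114 * n ^ 4 - 766098 * n ^ 3
      + 138753 * n ^ 2 + 14580 * n - 6561 : ZMod 17) = 0 := by
    exact_mod_cast congrArg (Int.cast : ℤ → ZMod 17) h
  revert h17
  have : ∀ m : ZMod 17, (30976 * m ^ 10 - 93632 * m ^ 9 - 274896 * m ^ 8 + 676496 * m ^ 7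
      + 70580 * m ^ 6 - 1376964 * m ^ 5 + 1569114 * m ^ 4 - 766098 * m ^ 3
      + 138753 * m ^ 2 + 14580 * m - 6561 : ZMod 17) ≠ 0 := by decide
  exact this n
end

section
/- The integer polynomial g₄(n) = 108295298266169344 n²⁸ − 1578632220535422976 n²⁷ + 9311723577440993280 n²⁶ − 30020826118265765888 n²⁵ + 56480859583533809664 n²⁴ − 34201181968036986880 n²³ − 166134072751850102784 n²² + 653988138655346800640 n²¹ − 1269321655065859079168 n²⁰ + 1420723402232025004160 n¹⁹ − 291714635577902883936 n¹⁸ − 2582683778801669449520 n¹⁷ + 6770894754722207547920 n¹⁶ − 10944187113221235636592 n¹⁵ + 13555805386036866935018 n¹⁴ − 13737333902075174510823 n¹³ + 11720517307272109891506 n¹² − 8535382247957070808665 n¹¹ + 5336352269983480520232 n¹⁰ − 2867703024491554846995 n⁹ + 1322914878412254530550 n⁸ − 522431105033231973729 n⁷ + 175773803489479604430 n⁶ − 49918422180208562604 n⁵ + 11741259740661392544 n⁴ − 2205270148985139708 n³ + 309462836760861120 n² − 28630525595816700 n + 1296455338665000 satisfies g₄(n) ≠ 0 for every integer n. -/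
/-- The polynomial `g₄` has no integer zero. -/
theorem g4_ne_zero (n : ℤ) :
    108295298266169344 * n ^ 28 - 1578632220535422976 * n ^ 27
      + 9311723577440993280 * n ^ 26 - 30020826118265765888 * n ^ 25
      + 56480859583533809664 * n ^ 24 - 34201181968036986880 * n ^ 23
      - 166134072751850102784 * n ^ 22 + 653988138655346800640 * n ^ 21
      - 1269321655065859079168 * n ^ 20 + 1420723402232025004160 * n ^ 19
      - 291714635577902883936 * n ^ 18 - 2582683778801669449520 * n ^ 17
      + 6770894754722207547920 * n ^ 16 - 10944187113221235636592 * n ^ 15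
      + 13555805386036866935018 * n ^ 14 - 13737333902075174510823 * n ^ 13
      + 11720517307272109891506 * n ^ 12 - 8535382247957070808665 * n ^ 11
      + 5336352269983480520232 * n ^ 10 - 2867703024491554846995 * n ^ 9
      + 1322914878412254530550 * n ^ 8 - 522431105033231973729 * n ^ 7
      + 175773803489479604430 * n ^ 6 - 49918422180208562604 * n ^ 5
      + 11741259740661392544 * n ^ 4 - 2205270148985139708 * n ^ 3
      + 309462836760861120 * n ^ 2 - 28630525595816700 * n
      + 1296455338665000 ≠ 0 := by
  intro h
  have key : ∀ x : ZMod 11,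
      108295298266169344 * x ^ 28 - 1578632220535422976 * x ^ 27
      + 9311723577440993280 * x ^ 26 - 30020826118265765888 * x ^ 25
      + 56480859583533809664 * x ^ 24 - 34201181968036986880 * x ^ 23
      - 166134072751850102784 * x ^ 22 + 653988138655346800640 * x ^ 21
      - 1269321655065859079168 * x ^ 20 + 1420723402232025004160 * x ^ 19
      - 291714635577902883936 * x ^ 18 - 2582683778801669449520 * x ^ 17
      + 6770894754722207547920 * x ^ 16 - 10944187113221235636592 * x ^ 15
      + 13555805386036866935018 * x ^ 14 - 13737333902075174510823 * x ^ 13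
      + 11720517307272109891506 * x ^ 12 - 8535382247957070808665 * x ^ 11
      + 5336352269983480520232 * x ^ 10 - 2867703024491554846995 * x ^ 9
      + 1322914878412254530550 * x ^ 8 - 522431105033231973729 * x ^ 7
      + 175773803489479604430 * x ^ 6 - 49918422180208562604 * x ^ 5
      + 11741259740661392544 * x ^ 4 - 2205270148985139708 * x ^ 3
      + 309462836760861120 * x ^ 2 - 28630525595816700 * x
      + 1296455338665000 ≠ 0 := by decide
  apply key ((n : ℤ) : ZMod 11)
  have := congrArg (fun z : ℤ => (z : ZMod 11)) h
  push_cast at this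
  exact this
end

section
/- The integer polynomial g₅(n) = 125419598061634584576 n³⁸ − 4058775327682313846784 n³⁷ + 61364532083457777467392 n³⁶ − 582936719229084397731840 n³⁵ + 3943379872911033271844864 n³⁴ − 20371782223780152285790208 n³³ + 83996702697827014071894016 n³² − 284517625089600742756231168 n³¹ + 805663391079536900830277632 n³⁰ − 1920640734900916387237049344 n²⁹ + 3836954501857572677445864064 n²⁸ − 6271979192897114647393521856 n²⁷ + 7760578552733394021465806368 n²⁶ − 4960446924702123953479190320 n²⁵ − 7465071488664393767860076264 n²⁴ + 35708801005589262962946399572 n²³ − 84222727411601389378170057962 n²² + 152434039009084653430665673211 n²¹ − 232437295292831894456601157082 n²⁰ + 309491421641544381910932790025 n¹⁹ − 366054612786171099332876352444 n¹⁸ + 388035250642103571764606350307 n¹⁷ − 370337448344968087579269096586 n¹⁶ + 318820688670520334196524737033 n¹⁵ − 247602958017955809443453495754 n¹⁴ + 173233782350652213882420588060 n¹³ − 108885985952016051266803373628 n¹² + 61222945466874004618327931304 n¹¹ − 30611663342976087375389167464 n¹⁰ + 13506540937664381785106978544 n⁹ − 5208033211875215795239060032 n⁸ + 1733872407863047422573508704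 n⁷ − 490817666374303669993349712 n⁶ + 115795112960087840103771888 n⁵ − 22152274459759464382843776 n⁴ + 3301481575103941278100080 n³ − 359562883864819986252000 n² + 25437319335136373184000 n − 875923032140153280000 satisfies g₅(n) ≠ 0 for every integer n. -/
set_option maxRecDepth 10000 in
lemma g5_mod19 : ∀ n : ZMod 19,      125419598061634584576 * n ^ 38 - 4058775327682313846784 * n ^ 37       + 61364532083457777467392 * n ^ 36 - 582936719229084397731840 * n ^ 35       + 3943379872911033271844864 * n ^ 34 - 20371782223780152285790208 * n ^ 33       + 83996702697827014071894016 * n ^ 32 - 284517625089600742756231168 * n ^ 31       + 805663391079536900830277632 * n ^ 30 - 1920640734900916387237049344 * n ^ 29       + 3836954501857572677445864064 * n ^ 28 - 6271979192897114647393521856 * n ^ 27       + 7760578552733394021465806368 * n ^ 26 - 4960446924702123953479190320 * n ^ 25       - 7465071488664393767860076264 * n ^ 24 + 35708801005589262962946399572 * n ^ 23       - 84222727411601389378170057962 * n ^ 22 + 152434039009084653430665673211 * n ^ 21       - 232437295292831894456601157082 * n ^ 20 + 309491421641544381910932790025 * n ^ 19       - 366054612786171099332876352444 * n ^ 18 +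 388035250642103571764606350307 * n ^ 17       - 370337448344968087579269096586 * n ^ 16 + 318820688670520334196524737033 * n ^ 15       - 247602958017955809443453495754 * n ^ 14 + 173233782350652213882420588060 * n ^ 13       - 108885985952016051266803373628 * n ^ 12 + 61222945466874004618327931304 * n ^ 11       - 30611663342976087375389167464 * n ^ 10 + 13506540937664381785106978544 * n ^ 9       - 5208033211875215795239060032 * n ^ 8 + 1733872407863047422573508704 * n ^ 7       - 490817666374303669993349712 * n ^ 6 + 115795112960087840103771888 * n ^ 5       - 22152274459759464382843776 * n ^ 4 + 3301481575103941278100080 * n ^ 3       - 359562883864819986252000 * n ^ 2 + 25437319335136373184000 * n       - 875923032140153280000  ≠ 0 := by decide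


/-- The polynomial `g₅` has no integer zero. -/
theorem g5_ne_zero (n : ℤ) :
    125419598061634584576 * n ^ 38 - 4058775327682313846784 * n ^ 37
      + 61364532083457777467392 * n ^ 36 - 582936719229084397731840 * n ^ 35
      + 3943379872911033271844864 * n ^ 34 - 20371782223780152285790208 * n ^ 33
      + 83996702697827014071894016 * n ^ 32 - 284517625089600742756231168 * n ^ 31
      + 805663391079536900830277632 * n ^ 30 - 1920640734900916387237049344 * n ^ 29
      + 3836954501857572677445864064 * n ^ 28 - 6271979192897114647393521856 * n ^ 27
      + 7760578552733394021465806368 * n ^ 26 - 4960446924702123953479190320 * n ^ 25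
      - 7465071488664393767860076264 * n ^ 24 + 35708801005589262962946399572 * n ^ 23
      - 84222727411601389378170057962 * n ^ 22 + 152434039009084653430665673211 * n ^ 21
      - 232437295292831894456601157082 * n ^ 20 + 309491421641544381910932790025 * n ^ 19
      - 366054612786171099332876352444 * n ^ 18 + 388035250642103571764606350307 * n ^ 17
      - 370337448344968087579269096586 * n ^ 16 + 318820688670520334196524737033 * n ^ 15
      - 247602958017955809443453495754 * n ^ 14 + 173233782350652213882420588060 * n ^ 13
      - 108885985952016051266803373628 * n ^ 12 + 61222945466874004618327931304 * n ^ 11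
      - 30611663342976087375389167464 * n ^ 10 + 13506540937664381785106978544 * n ^ 9
      - 5208033211875215795239060032 * n ^ 8 + 1733872407863047422573508704 * n ^ 7
      - 490817666374303669993349712 * n ^ 6 + 115795112960087840103771888 * n ^ 5
      - 22152274459759464382843776 * n ^ 4 + 3301481575103941278100080 * n ^ 3
      - 359562883864819986252000 * n ^ 2 + 25437319335136373184000 * n
      - 875923032140153280000 ≠ 0 := by
  intro h
  apply g5_mod19 (n : ZMod 19)
  have := congrArg (Int.cast : ℤ → ZMod 19) h
  push_cast at this
  linear_combination this
end
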